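/- Let μ be a finite complex Borel measure on R^d and x ∈ R^d. Then μ({x}) = lim_{R→∞} (1/(ω_d R^d)) ∫_{|ξ| ≤ R} μ̂(ξ) e^{2πi⟨x,ξ⟩} dξ, where ω_d is the Lebesgue measure of the unit Euclidean ball in R^d. -/

import Mathlib

/-!
Fubini rewrites the ball average of `μ̂(ξ) e^{2πi⟨x,ξ⟩}` as the `μ`-integral of the ball average
of the character `ξ ↦ e^{2πi⟨ξ, x - t⟩}`. That average is `1` for `t = x`. For `t ≠ x` it tends
to `0`: translating the ball by a vector `h` with `⟨h, x - t⟩ = 1/2` flips the sign of the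
character, while it changes the ball only inside a shell of width `‖h‖`, whose relative volume
`1 - (1 - ‖h‖/R)^d` tends to `0`. Dominated convergence, applied to the four parts of the Jordan
decompositions of `Re μ` and `Im μ`, gives `μ({x})`.
-/

open MeasureTheory Filter Topology Real
open scoped RealInnerProductSpace

/-- Integral of a complex-valued function against a finite complex measure. -/
noncomputable def cInt {α : Type*} [MeasurableSpace α]
    (μ : MeasureTheory.ComplexMeasure α) (f : α → ℂ) : ℂ :=
  ((∫ x, f x ∂μ.re.toJordanDecomposition.posPart)
      - ∫ x, f x ∂μ.re.toJordanDecomposition.negPart)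
    + Complex.I * ((∫ x, f x ∂μ.im.toJordanDecomposition.posPart)
      - ∫ x, f x ∂μ.im.toJordanDecomposition.negPart)

/-- Fourier transform of a finite complex measure on `ℝ^d`:
`μ̂(ξ) = ∫ e^{-2πi⟨ξ,t⟩} dμ(t)`. -/
noncomputable def fourierMeasure {d : ℕ}
    (μ : MeasureTheory.ComplexMeasure (EuclideanSpace ℝ (Fin d)))
    (ξ : EuclideanSpace ℝ (Fin d)) : ℂ :=
  cInt μ (fun t => Complex.exp (-(2 * (π : ℂ) * Complex.I * (⟪ξ, t⟫ : ℝ))))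


open Metric Module
open scoped FourierTransform ENNReal

section SetIntegral

variable {α F : Type*} [MeasurableSpace α] {μ : Measure α} [NormedAddCommGroup F] [NormedSpace ℝ F]

lemma norm_setIntegral_sub_setIntegral_le {f : α → F} {s t : Set α} {C : ℝ}
    (hC : ∀ x, ‖f x‖ ≤ C) (hs : MeasurableSet s) (ht : MeasurableSet t)
    (hfs : IntegrableOn f s μ) (hft : IntegrableOn f t μ) (hμs : μ s ≠ ∞) (hμt : μ t ≠ ∞) :
    ‖∫ x in s, f x ∂μ - ∫ x in t, f x ∂μ‖ ≤ C * μ.real (s \ t) + C * μ.real (t \ s) := by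
  have hsplit : ∫ x in s, f x ∂μ - ∫ x in t, f x ∂μ
      = ∫ x in s \ t, f x ∂μ - ∫ x in t \ s, f x ∂μ := by
    rw [← integral_inter_add_sdiff ht hfs, ← integral_inter_add_sdiff hs hft, Set.inter_comm]
    abel
  rw [hsplit]
  refine (norm_sub_le _ _).trans (add_le_add ?_ ?_) <;>
    exact norm_setIntegral_le_of_norm_le_const
      ((measure_mono Set.sdiff_subset).trans_lt (lt_top_iff_ne_top.2 ‹_›)) fun x _ => hC x

end SetIntegral

section Character

lemma Continuous.coe_fourierChar {X : Type*} [TopologicalSpace X] {f : X → ℝ}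
    (hf : Continuous f) : Continuous fun y => (𝐞 (f y) : ℂ) :=
  continuous_subtype_val.comp (continuous_fourierChar.comp hf)

lemma fourierChar_eq_exp (r : ℝ) : (𝐞 r : ℂ) = Complex.exp (2 * π * Complex.I * r) := by
  rw [Real.fourierChar_apply]
  push_cast
  ring_nf

variable {E : Type*} [NormedAddCommGroup E] [InnerProductSpace ℝ E]

lemma fourierChar_half : (𝐞 (1 / 2 : ℝ) : ℂ) = -1 := by
  rw [fourierChar_eq_exp, ← Complex.exp_pi_mul_I]
  push_cast
  ring_nf

lemma exists_inner_eq_half {s : E} (hs : s ≠ 0) : ∃ h : E, ⟪h, s⟫ = 1 / 2 := by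
  refine ⟨(2 * ‖s‖ ^ 2)⁻¹ • s, ?_⟩
  rw [real_inner_smul_left, real_inner_self_eq_norm_sq]
  field_simp [norm_ne_zero_iff.2 hs]

lemma fourierChar_inner_add_of_inner_eq_half {h s : E} (hhs : ⟪h, s⟫ = 1 / 2) (ξ : E) :
    (𝐞 ⟪ξ + h, s⟫ : ℂ) = -𝐞 ⟪ξ, s⟫ := by
  rw [inner_add_left, hhs, AddChar.map_add_eq_mul, Circle.coe_mul, fourierChar_half, mul_neg_one]

variable [MeasurableSpace E] [BorelSpace E] (μ : Measure E)

lemma setIntegral_closedBall_fourierChar_inner_eq_neg [μ.IsAddRightInvariant] {h s : E}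
    (hhs : ⟪h, s⟫ = 1 / 2) (R : ℝ) :
    ∫ ξ in closedBall h R, (𝐞 ⟪ξ, s⟫ : ℂ) ∂μ = -∫ ξ in closedBall 0 R, (𝐞 ⟪ξ, s⟫ : ℂ) ∂μ := by
  rw [← (measurePreserving_add_right μ h).setIntegral_preimage_emb (measurableEmbedding_addRight h)]
  have : (fun ξ => ξ + h) ⁻¹' closedBall h R = closedBall 0 R := by
    simp [add_comm]
  simp_rw [this, fourierChar_inner_add_of_inner_eq_half hhs, integral_neg]

end Character

section SetAverage

variable {α F : Type*} [MeasurableSpace α] {μ : Measure α} [NormedAddCommGroup F] [NormedSpace ℝ F]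

lemma norm_setAverage_le_of_norm_le_const {f : α → F} {s : Set α} {C : ℝ} (hμs : μ s ≠ ∞)
    (hC₀ : 0 ≤ C) (hC : ∀ x ∈ s, ‖f x‖ ≤ C) : ‖⨍ x in s, f x ∂μ‖ ≤ C := by
  rw [setAverage_eq, norm_smul, Real.norm_of_nonneg (inv_nonneg.2 measureReal_nonneg)]
  rcases (measureReal_nonneg (μ := μ) (s := s)).eq_or_lt with hs | hs
  · rwa [← hs, inv_zero, zero_mul]
  · rw [inv_mul_le_iff₀ hs, mul_comm]
    exact norm_setIntegral_le_of_norm_le_const hμs.lt_top hC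

end SetAverage

section HaarBall

variable {E : Type*} [NormedAddCommGroup E] [NormedSpace ℝ E] [FiniteDimensional ℝ E]
  [MeasurableSpace E] [BorelSpace E] (μ : Measure E) [μ.IsAddHaarMeasure]

lemma addHaar_real_closedBall_sdiff_closedBall_le {x y : E} {R : ℝ} (hxy : dist x y ≤ R) :
    μ.real (closedBall x R \ closedBall y R)
      ≤ (R ^ finrank ℝ E - (R - dist x y) ^ finrank ℝ E) * μ.real (closedBall 0 1) := by
  have hsub : closedBall x R \ closedBall y R ⊆ closedBall x R \ closedBall x (R - dist x y) := by
    refine Set.sdiff_subset_sdiff_right fun ξ hξ => ?_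
    rw [mem_closedBall] at hξ ⊢
    linarith [dist_triangle ξ x y]
  calc μ.real (closedBall x R \ closedBall y R)
      ≤ μ.real (closedBall x R \ closedBall x (R - dist x y)) :=
        measureReal_mono hsub (measure_ne_top_of_subset Set.sdiff_subset
          measure_closedBall_lt_top.ne)
    _ = μ.real (closedBall x R) - μ.real (closedBall x (R - dist x y)) :=
        measureReal_sdiff (closedBall_subset_closedBall (by linarith [dist_nonneg (x := x) (y := y)]))
          measurableSet_closedBall measure_closedBall_lt_top.ne
    _ = _ := by
        rw [Measure.addHaar_real_closedBall' μ x (dist_nonneg.trans hxy),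
          Measure.addHaar_real_closedBall' μ x (sub_nonneg.2 hxy)]
        ring

end HaarBall

section CharacterAverage

variable {E : Type*} [NormedAddCommGroup E] [InnerProductSpace ℝ E] [FiniteDimensional ℝ E]
  [MeasurableSpace E] [BorelSpace E] (μ : Measure E) [μ.IsAddHaarMeasure]

lemma norm_setIntegral_closedBall_fourierChar_inner_le {h s : E} (hhs : ⟪h, s⟫ = 1 / 2) {R : ℝ}
    (hR : ‖h‖ ≤ R) :
    ‖∫ ξ in closedBall 0 R, (𝐞 ⟪ξ, s⟫ : ℂ) ∂μ‖
      ≤ (R ^ finrank ℝ E - (R - ‖h‖) ^ finrank ℝ E) * μ.real (closedBall 0 1) := by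
  have hint (x : E) : IntegrableOn (fun ξ : E => (𝐞 ⟪ξ, s⟫ : ℂ)) (closedBall x R) μ :=
    (continuous_id.inner continuous_const).coe_fourierChar.continuousOn.integrableOn_compact
      (isCompact_closedBall x R)
  have hdiff := norm_setIntegral_sub_setIntegral_le (μ := μ) (fun ξ => (Circle.norm_coe _).le)
    measurableSet_closedBall measurableSet_closedBall (hint 0) (hint h)
    measure_closedBall_lt_top.ne measure_closedBall_lt_top.ne
  have h₁ := addHaar_real_closedBall_sdiff_closedBall_le μ (x := 0) (y := h) (by simpa using hR)
  have h₂ := addHaar_real_closedBall_sdiff_closedBall_le μ (x := h) (y := 0) (by simpa using hR)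
  rw [setIntegral_closedBall_fourierChar_inner_eq_neg μ hhs, sub_neg_eq_add, ← two_mul,
    norm_mul, Complex.norm_two] at hdiff
  simp only [dist_zero_left, dist_zero_right] at h₁ h₂
  linarith

lemma tendsto_setAverage_closedBall_fourierChar_inner {s : E} (hs : s ≠ 0) :
    Tendsto (fun R => ⨍ ξ in closedBall 0 R, (𝐞 ⟪ξ, s⟫ : ℂ) ∂μ) atTop (𝓝 0) := by
  obtain ⟨h, hhs⟩ := exists_inner_eq_half hs
  set n := finrank ℝ E
  have hω : 0 < μ.real (closedBall (0 : E) 1) :=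
    ENNReal.toReal_pos (measure_closedBall_pos μ _ one_pos).ne' measure_closedBall_lt_top.ne
  have hlim : Tendsto (fun R : ℝ => 1 - (1 - ‖h‖ / R) ^ n) atTop (𝓝 0) := by
    have hdiv : Tendsto (fun R : ℝ => ‖h‖ / R) atTop (𝓝 0) :=
      tendsto_const_nhds.div_atTop tendsto_id
    simpa using (tendsto_const_nhds (x := (1 : ℝ))).sub
      (((tendsto_const_nhds (x := (1 : ℝ))).sub hdiv).pow n)
  refine squeeze_zero_norm' ?_ hlim
  filter_upwards [eventually_ge_atTop ‖h‖, eventually_gt_atTop 0] with R hhR hR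
  have hball : 0 < μ.real (closedBall (0 : E) R) := by
    rw [Measure.addHaar_real_closedBall' μ 0 hR.le]; positivity
  calc ‖⨍ ξ in closedBall 0 R, (𝐞 ⟪ξ, s⟫ : ℂ) ∂μ‖
      = (μ.real (closedBall (0 : E) R))⁻¹ * ‖∫ ξ in closedBall 0 R, (𝐞 ⟪ξ, s⟫ : ℂ) ∂μ‖ := by
        rw [setAverage_eq, norm_smul, Real.norm_of_nonneg (inv_nonneg.2 hball.le)]
    _ ≤ (R ^ n * μ.real (closedBall (0 : E) 1))⁻¹
          * ((R ^ n - (R - ‖h‖) ^ n) * μ.real (closedBall 0 1)) := by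
        rw [← Measure.addHaar_real_closedBall' μ 0 hR.le]
        gcongr
        exact norm_setIntegral_closedBall_fourierChar_inner_le μ hhs hhR
    _ = 1 - (1 - ‖h‖ / R) ^ n := by
        rw [one_sub_div hR.ne', div_pow]
        field_simp

lemma tendsto_setAverage_closedBall_fourierChar_inner_sub (x t : E) :
    Tendsto (fun R => ⨍ ξ in closedBall 0 R, (𝐞 ⟪ξ, x - t⟫ : ℂ) ∂μ) atTop
      (𝓝 (({x} : Set E).indicator (fun _ => 1) t)) := by
  by_cases hxt : t = x
  · subst hxt
    refine tendsto_const_nhds.congr' ?_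
    filter_upwards [eventually_gt_atTop 0] with R hR
    simp only [sub_self, inner_zero_right, AddChar.map_zero_eq_one, Circle.coe_one,
      Set.indicator_of_mem (Set.mem_singleton t)]
    exact (setAverage_const (measure_closedBall_pos μ 0 hR).ne'
      measure_closedBall_lt_top.ne 1).symm
  · rw [Set.indicator_of_notMem (by simpa using hxt)]
    exact tendsto_setAverage_closedBall_fourierChar_inner μ (sub_ne_zero.2 (Ne.symm hxt))

end CharacterAverage

section FiniteMeasure

variable {E : Type*} [NormedAddCommGroup E] [InnerProductSpace ℝ E] [MeasurableSpace E]

noncomputable def MeasureTheory.Measure.fourierTransform (ν : Measure E) (ξ : E) : ℂ :=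
  ∫ t, (𝐞 (-⟪ξ, t⟫) : ℂ) ∂ν

variable [BorelSpace E]

lemma MeasureTheory.Measure.continuous_fourierTransform (ν : Measure E) [IsFiniteMeasure ν] :
    Continuous ν.fourierTransform := by
  have := VectorFourier.fourierIntegral_continuous (e := 𝐞) (μ := ν) (L := innerₗ E)
    continuous_fourierChar continuous_inner (integrable_const (1 : ℂ))
  convert this using 1; ext ξ
  simp [VectorFourier.fourierIntegral, Measure.fourierTransform, real_inner_comm, Circle.smul_def]

variable [FiniteDimensional ℝ E] (μ : Measure E) [μ.IsAddHaarMeasure]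

lemma setAverage_fourierTransform_mul_fourierChar_inner (ν : Measure E) [IsFiniteMeasure ν]
    (x : E) (R : ℝ) :
    ⨍ ξ in closedBall 0 R, ν.fourierTransform ξ * 𝐞 ⟪x, ξ⟫ ∂μ
      = ∫ t, ⨍ ξ in closedBall 0 R, (𝐞 ⟪ξ, x - t⟫ : ℂ) ∂μ ∂ν := by
  have hkernel (ξ t : E) : (𝐞 (-⟪ξ, t⟫) : ℂ) * 𝐞 ⟪x, ξ⟫ = 𝐞 ⟪ξ, x - t⟫ := by
    rw [← Circle.coe_mul, ← AddChar.map_add_eq_mul, inner_sub_right, real_inner_comm x,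
      neg_add_eq_sub]
  have : IsFiniteMeasure (μ.restrict (closedBall 0 R)) :=
    isFiniteMeasure_restrict.2 measure_closedBall_lt_top.ne
  simp_rw [setAverage_eq, integral_smul, Measure.fourierTransform, ← integral_mul_const, hkernel]
  congr 1
  refine integral_integral_swap ((integrable_const (1 : ℝ)).mono' ?_ (ae_of_all _ fun p => ?_))
  · exact (continuous_fst.inner (continuous_const.sub continuous_snd)).coe_fourierChar
      |>.aestronglyMeasurable
  · exact (Circle.norm_coe _).le

theorem tendsto_setAverage_fourierTransform_mul_fourierChar_inner (ν : Measure E)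
    [IsFiniteMeasure ν] (x : E) :
    Tendsto (fun R => ⨍ ξ in closedBall 0 R, ν.fourierTransform ξ * 𝐞 ⟪x, ξ⟫ ∂μ) atTop
      (𝓝 (ν.real {x})) := by
  have hatom : (ν.real {x} : ℂ) = ∫ t, ({x} : Set E).indicator (fun _ => 1) t ∂ν := by
    rw [integral_indicator_const _ (measurableSet_singleton x), Complex.real_smul, mul_one]
  simp_rw [setAverage_fourierTransform_mul_fourierChar_inner, hatom]
  refine tendsto_integral_filter_of_dominated_convergence (fun _ => 1) (.of_forall fun R => ?_)
    (.of_forall fun R => ae_of_all _ fun t => ?_) (integrable_const 1)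
    (ae_of_all _ (tendsto_setAverage_closedBall_fourierChar_inner_sub μ x))
  · simp_rw [setAverage_eq]
    have hcont := continuous_parametric_integral_of_continuous (μ := μ)
      (f := fun t ξ => (𝐞 ⟪ξ, x - t⟫ : ℂ))
      (continuous_snd.inner (continuous_const.sub continuous_fst)).coe_fourierChar
      (isCompact_closedBall (0 : E) R)
    exact (continuous_const.smul hcont).aestronglyMeasurable
  · exact norm_setAverage_le_of_norm_le_const measure_closedBall_lt_top.ne zero_le_one
      fun ξ _ => (Circle.norm_coe _).le

end FiniteMeasure

lemma MeasureTheory.ComplexMeasure.apply_eq_jordanDecomposition {α : Type*} [MeasurableSpace α]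
    (c : ComplexMeasure α) {i : Set α} (hi : MeasurableSet i) :
    c i = ((c.re.toJordanDecomposition.posPart.real i : ℂ)
        - c.re.toJordanDecomposition.negPart.real i)
      + Complex.I * ((c.im.toJordanDecomposition.posPart.real i : ℂ)
        - c.im.toJordanDecomposition.negPart.real i) := by
  rw [← Complex.ofReal_sub, ← Complex.ofReal_sub,
    ← SignedMeasure.apply_eq_posPart_real_sub_negPart_real _ hi,
    ← SignedMeasure.apply_eq_posPart_real_sub_negPart_real _ hi, mul_comm]
  exact (Complex.re_add_im (c i)).symm

section FourierMeasure

variable {d : ℕ} (μ : ComplexMeasure (EuclideanSpace ℝ (Fin d)))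

lemma fourierMeasure_eq_fourierTransform (ξ : EuclideanSpace ℝ (Fin d)) :
    fourierMeasure μ ξ
      = (μ.re.toJordanDecomposition.posPart.fourierTransform ξ
          - μ.re.toJordanDecomposition.negPart.fourierTransform ξ)
        + Complex.I * (μ.im.toJordanDecomposition.posPart.fourierTransform ξ
          - μ.im.toJordanDecomposition.negPart.fourierTransform ξ) := by
  simp only [fourierMeasure, cInt, Measure.fourierTransform, fourierChar_eq_exp]
  push_cast
  ring_nf

theorem tendsto_setAverage_fourierMeasure_mul_fourierChar_inner (x : EuclideanSpace ℝ (Fin d)) :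
    Tendsto (fun R => ⨍ ξ in closedBall 0 R, fourierMeasure μ ξ * 𝐞 ⟪x, ξ⟫) atTop
      (𝓝 (μ {x})) := by
  set J := μ.re.toJordanDecomposition
  set K := μ.im.toJordanDecomposition
  have hlim := ((tendsto_setAverage_fourierTransform_mul_fourierChar_inner volume J.posPart x).sub
      (tendsto_setAverage_fourierTransform_mul_fourierChar_inner volume J.negPart x)).add
    (((tendsto_setAverage_fourierTransform_mul_fourierChar_inner volume K.posPart x).sub
      (tendsto_setAverage_fourierTransform_mul_fourierChar_inner volume K.negPart x)).const_mul
        Complex.I)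
  rw [μ.apply_eq_jordanDecomposition (measurableSet_singleton x)]
  refine hlim.congr fun R => Eq.symm ?_
  have hint (ν : Measure (EuclideanSpace ℝ (Fin d))) [IsFiniteMeasure ν] :
      IntegrableOn (fun ξ => ν.fourierTransform ξ * 𝐞 ⟪x, ξ⟫) (closedBall 0 R) :=
    (ν.continuous_fourierTransform.mul (continuous_const.inner continuous_id).coe_fourierChar
      ).continuousOn.integrableOn_compact (isCompact_closedBall 0 R)
  simp_rw [fourierMeasure_eq_fourierTransform, add_mul, mul_assoc, sub_mul]
  rw [setAverage_eq, integral_add (Integrable.sub' (hint _) (hint _))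
      ((Integrable.sub' (hint _) (hint _)).const_mul _),
    integral_sub (hint _) (hint _), integral_const_mul, integral_sub (hint _) (hint _)]
  simp only [setAverage_eq, Complex.real_smul]
  ring

end FourierMeasure

/-- **Wiener's lemma on `ℝ^d` for Euclidean balls.** For a finite complex Borel measure
`μ` on `ℝ^d` and every `x`,
`μ({x}) = lim_{R→∞} (1/(ω_d R^d)) ∫_{|ξ|≤R} μ̂(ξ) e^{2πi⟨x,ξ⟩} dξ`,
where `ω_d` is the volume of the unit ball. -/
theorem wiener_lemma_balls {d : ℕ}
    (μ : MeasureTheory.ComplexMeasure (EuclideanSpace ℝ (Fin d)))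
    (x : EuclideanSpace ℝ (Fin d)) :
    Tendsto (fun R : ℝ =>
        ((((volume (Metric.closedBall (0 : EuclideanSpace ℝ (Fin d)) 1)).toReal
            * R ^ d : ℝ) : ℂ))⁻¹ *
          ∫ ξ in Metric.closedBall (0 : EuclideanSpace ℝ (Fin d)) R,
            fourierMeasure μ ξ * Complex.exp (2 * (π : ℂ) * Complex.I * (⟪x, ξ⟫ : ℝ)))
      atTop (𝓝 (μ {x})) := by
  refine (tendsto_setAverage_fourierMeasure_mul_fourierChar_inner μ x).congr' ?_
  filter_upwards [eventually_ge_atTop 0] with R hR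
  rw [setAverage_eq, Measure.addHaar_real_closedBall' volume 0 hR, finrank_euclideanSpace_fin,
    Complex.real_smul, mul_comm (R ^ d)]
  simp_rw [fourierChar_eq_exp]
  push_cast
  rfl
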